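/- arXiv:2603.14831 — 3 statements merged into one kernel-verified Lean document; each statement's English description precedes it below -/
import Mathlib

section
/- Let L be a real symmetric positive definite d×d matrix, c ∈ ℝ^d, π : ℝ^d → ℝ^m a continuous linear map, and φ : ℝ^m → ℝ^m a continuous map satisfying ‖φ(z)‖ ≤ C · (1 + ‖z‖) for some constant C > 0 and all z. Define E(ω, ŷ) = (1/2)⟨ω, L ω⟩ + ⟨c, ω⟩ + (1/2)‖φ(π ω) − ŷ‖² on ℝ^d × ℝ^m. Then E is coercive: E(ω, ŷ) tends to infinity as ‖ω‖ + ‖ŷ‖ tends to infinity; in particular every sublevel set {(ω, ŷ) : E(ω, ŷ) ≤ M} is bounded. -/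
open Matrix

lemma posdef_inner_pos' {d : ℕ} {L : Matrix (Fin d) (Fin d) ℝ} (hL : L.PosDef)
    (x : EuclideanSpace ℝ (Fin d)) (hx : x ≠ 0) :
    0 < (inner ℝ x (Matrix.toEuclideanLin L x) : ℝ) := by
  have := (Matrix.posDef_iff_dotProduct_mulVec.mp hL).2 (x := WithLp.equiv 2 _ x) (by simpa using hx)
  simpa [PiLp.inner_apply, Matrix.toEuclideanLin_apply, dotProduct, mul_comm] using this

lemma stepA (μ D t r s a e : ℝ) (hμ : 0 < μ) (hD : 0 < D) (hr : 0 ≤ r) (hs : 0 ≤ s)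
    (ha0 : 0 ≤ a) (he : 0 ≤ e) (ha : a ≤ D * (1 + r)) (hsa : s - a ≤ e)
    (ht1 : 1 ≤ t) (htμ : 16 * D ^ 2 ≤ t * μ) :
    s ^ 2 / (2 * (1 + t)) ≤ 1 / 2 * e ^ 2 + μ / 8 + μ / 8 * r ^ 2 := by
  have ht0 : 0 < t := lt_of_lt_of_le one_pos ht1
  have hs2 : s ^ 2 ≤ (e + a) ^ 2 := by nlinarith
  have master : t * s ^ 2 ≤ t * (1 + t) * e ^ 2 + (t + 1) * a ^ 2 := by
    nlinarith [sq_nonneg (t * e - a)]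
  have ha2 : a ^ 2 ≤ D ^ 2 * (1 + r) ^ 2 := by nlinarith
  have ha2' : a ^ 2 ≤ 2 * D ^ 2 * (1 + r ^ 2) := by nlinarith [sq_nonneg (1 - r)]
  have h4 : (t + 1) * a ^ 2 ≤ μ / 4 * (1 + r ^ 2) * (t * (1 + t)) := by
    nlinarith [mul_le_mul_of_nonneg_left ha2' (by linarith : (0:ℝ) ≤ t + 1),
      mul_le_mul_of_nonneg_right htμ
        (mul_nonneg (by linarith : (0:ℝ) ≤ 1 + t) (by positivity : (0:ℝ) ≤ 1 + r ^ 2))]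
  have step : s ^ 2 ≤ (e ^ 2 + μ / 4 * (1 + r ^ 2)) * (1 + t) := by
    refine le_of_mul_le_mul_left ?_ ht0
    nlinarith
  rw [div_le_iff₀ (by positivity)]
  nlinarith

lemma minsplit (A G x y : ℝ) (hA : 0 < A) (hG : 0 < G) (hx : 0 ≤ x) (hy : 0 ≤ y) :
    min A G / 2 * (x + y) ^ 2 ≤ A * x ^ 2 + G * y ^ 2 := by
  have hm0 : 0 < min A G := lt_min hA hG
  nlinarith [mul_nonneg hm0.le (sq_nonneg (x - y)),
    mul_le_mul_of_nonneg_right (min_le_left A G) (sq_nonneg x),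
    mul_le_mul_of_nonneg_right (min_le_right A G) (sq_nonneg y)]

lemma pointwise (μ D t nc r s a e Q ic : ℝ) (hμ : 0 < μ) (hD : 0 < D) (hnc : 0 ≤ nc)
    (hr0 : 0 ≤ r) (hs0 : 0 ≤ s) (ha0 : 0 ≤ a) (he0 : 0 ≤ e)
    (hQp : μ * r ^ 2 ≤ Q) (hic : -(nc * r) ≤ ic)
    (haD : a ≤ D * (1 + r)) (hsa : s - a ≤ e)
    (ht1 : 1 ≤ t) (htμ : 16 * D ^ 2 ≤ t * μ) :
    μ / 8 * r ^ 2 + 1 / (2 * (1 + t)) * s ^ 2 - (nc ^ 2 / μ + μ / 8)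
      ≤ 1 / 2 * Q + ic + 1 / 2 * e ^ 2 := by
  have hcr : nc * r ≤ μ / 4 * r ^ 2 + nc ^ 2 / μ := by
    have key : μ * (nc * r) ≤ μ * (μ / 4 * r ^ 2) + nc ^ 2 := by
      nlinarith [sq_nonneg (μ * r / 2 - nc)]
    have hexp : μ * (μ / 4 * r ^ 2 + nc ^ 2 / μ) = μ * (μ / 4 * r ^ 2) + nc ^ 2 := by
      field_simp
    refine le_of_mul_le_mul_left ?_ hμ
    rw [hexp]; exact key
  have hA := stepA μ D t r s a e hμ hD hr0 hs0 ha0 he0 haD hsa ht1 htμ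
  have hγs : 1 / (2 * (1 + t)) * s ^ 2 = s ^ 2 / (2 * (1 + t)) := by ring
  rw [hγs]
  linarith


set_option maxHeartbeats 800000 in
/-- The augmented Lyapunov energy
`E(ω, ŷ) = (1/2)⟨ω, L ω⟩ + ⟨c, ω⟩ + (1/2)‖φ(π ω) - ŷ‖²`, with `L` symmetric
positive definite and `φ` continuous of at most linear growth, is coercive:
it tends to infinity as `‖ω‖ + ‖ŷ‖ → ∞`; in particular all its sublevel sets
are bounded. -/
theorem stmt_9 (d m : ℕ) (L : Matrix (Fin d) (Fin d) ℝ) (hL : L.PosDef)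
    (c : EuclideanSpace ℝ (Fin d))
    (π : EuclideanSpace ℝ (Fin d) →L[ℝ] EuclideanSpace ℝ (Fin m))
    (φ : EuclideanSpace ℝ (Fin m) → EuclideanSpace ℝ (Fin m))
    (hφ : Continuous φ) (C : ℝ) (hC : 0 < C)
    (hgrow : ∀ zv, ‖φ zv‖ ≤ C * (1 + ‖zv‖))
    (E : EuclideanSpace ℝ (Fin d) × EuclideanSpace ℝ (Fin m) → ℝ)
    (hE : ∀ p, E p = (1 / 2) * inner ℝ p.1 (Matrix.toEuclideanLin L p.1)
      + inner ℝ c p.1 + (1 / 2) * ‖φ (π p.1) - p.2‖ ^ 2) :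
    Filter.Tendsto E
      (Filter.comap (fun p : EuclideanSpace ℝ (Fin d) × EuclideanSpace ℝ (Fin m) =>
        ‖p.1‖ + ‖p.2‖) Filter.atTop) Filter.atTop ∧
    ∀ M : ℝ, Bornology.IsBounded {p : EuclideanSpace ℝ (Fin d) × EuclideanSpace ℝ (Fin m) |
      E p ≤ M} := by
  -- a coercivity constant for the quadratic form
  obtain ⟨μ, hμ, hQ⟩ : ∃ μ > 0, ∀ x : EuclideanSpace ℝ (Fin d),
      μ * ‖x‖ ^ 2 ≤ (inner ℝ x (Matrix.toEuclideanLin L x) : ℝ) := by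
    set T := Matrix.toEuclideanLin L with hT
    have hTc : Continuous T := T.continuous_of_finiteDimensional
    set Q : EuclideanSpace ℝ (Fin d) → ℝ := fun x => inner ℝ x (T x) with hQdef
    have hQc : Continuous Q := continuous_id.inner hTc
    rcases Nat.eq_zero_or_pos d with hd | hd
    · refine ⟨1, one_pos, fun x => ?_⟩
      subst hd
      have : x = 0 := Subsingleton.elim x 0
      simp [this, hQdef]
    · haveI : Nonempty (Fin d) := ⟨⟨0, hd⟩⟩
      have hsph : (Metric.sphere (0 : EuclideanSpace ℝ (Fin d)) 1).Nonempty :=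
        NormedSpace.sphere_nonempty.mpr zero_le_one
      obtain ⟨x₀, hx₀, hmin⟩ := (isCompact_sphere (0 : EuclideanSpace ℝ (Fin d)) 1).exists_isMinOn
        hsph hQc.continuousOn
      have hx₀norm : ‖x₀‖ = 1 := by simpa using hx₀
      have hx₀ne : x₀ ≠ 0 := by intro h; simp [h] at hx₀norm
      refine ⟨Q x₀, posdef_inner_pos' hL x₀ hx₀ne, fun x => ?_⟩
      rcases eq_or_ne x 0 with rfl | hx
      · simp [hQdef]
      · have hr : 0 < ‖x‖ := norm_pos_iff.mpr hx
        have hu : ‖(‖x‖⁻¹ • x)‖ = 1 := by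
          rw [norm_smul]; simp [hr.ne', abs_of_pos (inv_pos.mpr hr)]
        have hmem : (‖x‖⁻¹ • x) ∈ Metric.sphere (0 : EuclideanSpace ℝ (Fin d)) 1 := by
          simpa using hu
        have h1 : Q x₀ ≤ Q (‖x‖⁻¹ • x) := hmin hmem
        have h2 : Q (‖x‖⁻¹ • x) = ‖x‖⁻¹ * ‖x‖⁻¹ * Q x := by
          simp only [hQdef, _root_.map_smul, real_inner_smul_left, real_inner_smul_right,
            smul_eq_mul]
          ring
        rw [h2] at h1
        have := mul_le_mul_of_nonneg_left h1 (le_of_lt (mul_pos hr hr))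
        calc Q x₀ * ‖x‖ ^ 2 = ‖x‖ * ‖x‖ * Q x₀ := by ring
          _ ≤ ‖x‖ * ‖x‖ * (‖x‖⁻¹ * ‖x‖⁻¹ * Q x) := this
          _ = Q x := by field_simp
  set K : ℝ := ‖π‖ with hK
  have hK0 : 0 ≤ K := norm_nonneg _
  set D : ℝ := C * (1 + K) with hD
  have hD0 : 0 < D := by positivity
  set t : ℝ := max 1 (16 * D ^ 2 / μ) with ht
  have ht1 : 1 ≤ t := le_max_left _ _
  have ht0 : 0 < t := lt_of_lt_of_le one_pos ht1
  have htμ : 16 * D ^ 2 ≤ t * μ := by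
    have := le_max_right 1 (16 * D ^ 2 / μ)
    rwa [div_le_iff₀ hμ] at this
  set B : ℝ := ‖c‖ ^ 2 / μ + μ / 8 with hB
  set γ : ℝ := 1 / (2 * (1 + t)) with hγ
  have hγ0 : 0 < γ := by positivity
  -- master pointwise lower bound
  have hmaster : ∀ p : EuclideanSpace ℝ (Fin d) × EuclideanSpace ℝ (Fin m),
      μ / 8 * ‖p.1‖ ^ 2 + γ * ‖p.2‖ ^ 2 - B ≤ E p := by
    intro p
    rw [hE]
    set r : ℝ := ‖p.1‖ with hr
    set s : ℝ := ‖p.2‖ with hs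
    set a : ℝ := ‖φ (π p.1)‖ with ha
    set e : ℝ := ‖φ (π p.1) - p.2‖ with he
    have hr0 : 0 ≤ r := norm_nonneg _
    have hs0 : 0 ≤ s := norm_nonneg _
    have ha0 : 0 ≤ a := norm_nonneg _
    have he0 : 0 ≤ e := norm_nonneg _
    have hQp : μ * r ^ 2 ≤ inner ℝ p.1 (Matrix.toEuclideanLin L p.1) := hQ p.1
    have hic : -(‖c‖ * r) ≤ (inner ℝ c p.1 : ℝ) := by
      have h1 : |(inner ℝ c p.1 : ℝ)| ≤ ‖c‖ * r := abs_real_inner_le_norm c p.1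
      linarith [neg_abs_le (inner ℝ c p.1 : ℝ)]
    have haD : a ≤ D * (1 + r) := by
      have h1 : ‖π p.1‖ ≤ K * r := π.le_opNorm p.1
      have h2 : a ≤ C * (1 + ‖π p.1‖) := hgrow _
      have h3 : C * (1 + ‖π p.1‖) ≤ C * (1 + K * r) :=
        mul_le_mul_of_nonneg_left (by linarith) hC.le
      have h4 : C * (1 + K * r) ≤ D * (1 + r) := by
        rw [hD]
        have h5 : 1 + K * r ≤ (1 + K) * (1 + r) := by nlinarith
        calc C * (1 + K * r) ≤ C * ((1 + K) * (1 + r)) :=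
              mul_le_mul_of_nonneg_left h5 hC.le
          _ = C * (1 + K) * (1 + r) := by ring
      linarith
    have hsa : s - a ≤ e := by
      have h1 : ‖p.2‖ - ‖φ (π p.1)‖ ≤ ‖p.2 - φ (π p.1)‖ := norm_sub_norm_le _ _
      rw [norm_sub_rev] at h1
      linarith
    have := pointwise μ D t ‖c‖ r s a e (inner ℝ p.1 (Matrix.toEuclideanLin L p.1))
      (inner ℝ c p.1) hμ hD0 (norm_nonneg c) hr0 hs0 ha0 he0 hQp hic haD hsa ht1 htμ
    rw [hB, hγ]
    linarith
  set α : ℝ := min (μ / 8) γ / 2 with hα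
  have hα0 : 0 < α := by
    have := lt_min (by positivity : (0:ℝ) < μ / 8) hγ0
    positivity
  have hbound : ∀ p : EuclideanSpace ℝ (Fin d) × EuclideanSpace ℝ (Fin m),
      α * (‖p.1‖ + ‖p.2‖) ^ 2 - B ≤ E p := by
    intro p
    have h1 := hmaster p
    have h2 : α * (‖p.1‖ + ‖p.2‖) ^ 2 ≤ μ / 8 * ‖p.1‖ ^ 2 + γ * ‖p.2‖ ^ 2 :=
      minsplit (μ / 8) γ ‖p.1‖ ‖p.2‖ (by positivity) hγ0 (norm_nonneg _) (norm_nonneg _)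
    exact le_trans (by linarith [h2]) h1
  constructor
  · have hg : Filter.Tendsto (fun x : ℝ => α * x ^ 2 - B) Filter.atTop Filter.atTop := by
      have h1 : Filter.Tendsto (fun x : ℝ => x ^ 2) Filter.atTop Filter.atTop :=
        Filter.tendsto_pow_atTop two_ne_zero
      have h2 := h1.const_mul_atTop hα0
      simpa [sub_eq_add_neg] using Filter.tendsto_atTop_add_const_right _ (-B) h2
    have hcomp := hg.comp
      (Filter.tendsto_comap (f := fun p : EuclideanSpace ℝ (Fin d) × EuclideanSpace ℝ (Fin m) =>
        ‖p.1‖ + ‖p.2‖))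
    exact Filter.tendsto_atTop_mono hbound hcomp
  · intro M
    rw [isBounded_iff_forall_norm_le]
    refine ⟨Real.sqrt (max 0 ((M + B) / α)), fun p hp => ?_⟩
    have hp' : E p ≤ M := hp
    have h1 := hbound p
    have h2 : (‖p.1‖ + ‖p.2‖) ^ 2 ≤ (M + B) / α := by
      rw [le_div_iff₀ hα0]
      nlinarith
    have h3 : ‖p‖ ≤ ‖p.1‖ + ‖p.2‖ := by
      rw [Prod.norm_def]
      exact max_le (by linarith [norm_nonneg p.2]) (by linarith [norm_nonneg p.1])
    have h4 : ‖p‖ ^ 2 ≤ max 0 ((M + B) / α) := by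
      have hn : 0 ≤ ‖p‖ := norm_nonneg _
      have : ‖p‖ ^ 2 ≤ (‖p.1‖ + ‖p.2‖) ^ 2 := by nlinarith [norm_nonneg p.1, norm_nonneg p.2]
      exact le_trans this (le_trans h2 (le_max_right _ _))
    exact Real.le_sqrt_of_sq_le h4
end

section
/- Let R be an n1×n1 real diagonal matrix whose diagonal entries all lie in {0, 1}, and let W be an n2×n1 real matrix. Define the linear map δ : ℝ^{n1} × ℝ^{n1} × ℝ^{n2} → ℝ^{n1} × ℝ^{n1} × ℝ^{n2} by δ(z, a, w) = (z, a − R.mulVec z, w − W.mulVec a). Then the composition of δ with its adjoint (for the standard inner products) satisfies, for all (z, a, w): δᵀ(δ(z, a, w)) = ((1 + R).mulVec z − R.mulVec a, −R.mulVec z + (1 + Wᵀ * W).mulVec a − Wᵀ.mulVec w, −W.mulVec a + w). -/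
open Matrix

private lemma dot_mulVec {m n : ℕ} (A : Matrix (Fin m) (Fin n) ℝ)
    (x : Fin n → ℝ) (y : Fin m → ℝ) :
    ∑ i, (A.mulVec x) i * y i = ∑ j, x j * (Aᵀ.mulVec y) j := by
  simp only [mulVec, dotProduct, transpose_apply, Finset.sum_mul, Finset.mul_sum]
  rw [Finset.sum_comm]
  apply Finset.sum_congr rfl
  intro i _
  apply Finset.sum_congr rfl
  intro j _
  ring

private lemma single_dot {n : ℕ} (i : Fin n) (x : Fin n → ℝ) :
    ∑ j, (Pi.single i 1 : Fin n → ℝ) j * x j = x i := by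
  simp [Pi.single_apply, Finset.sum_ite_eq]

/-- For the restricted coboundary `δ(z, a, w) = (z, a - R z, w - W a)` of the
one-hidden-layer neural sheaf, where `R` is a `{0,1}`-diagonal (frozen ReLU)
matrix, the composition with the adjoint `T = δᵀ` (characterized by
`⟨δ u, v⟩ = ⟨u, T v⟩` for the standard inner products) is given by the
explicit block-tridiagonal Laplacian formula. -/
theorem stmt_15 (n1 n2 : ℕ)
    (R : Matrix (Fin n1) (Fin n1) ℝ)
    (hRdiag : ∀ i j, i ≠ j → R i j = 0)
    (hR01 : ∀ i, R i i = 0 ∨ R i i = 1)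
    (W : Matrix (Fin n2) (Fin n1) ℝ)
    (δ T : (Fin n1 → ℝ) × (Fin n1 → ℝ) × (Fin n2 → ℝ) →
      (Fin n1 → ℝ) × (Fin n1 → ℝ) × (Fin n2 → ℝ))
    (hδ : ∀ p, δ p = (p.1, p.2.1 - R.mulVec p.1, p.2.2 - W.mulVec p.2.1))
    (hT : ∀ u v,
      (∑ i, (δ u).1 i * v.1 i) + (∑ i, (δ u).2.1 i * v.2.1 i)
        + (∑ i, (δ u).2.2 i * v.2.2 i)
      = (∑ i, u.1 i * (T v).1 i) + (∑ i, u.2.1 i * (T v).2.1 i)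
        + (∑ i, u.2.2 i * (T v).2.2 i)) :
    ∀ (z a : Fin n1 → ℝ) (w : Fin n2 → ℝ),
      T (δ (z, a, w)) =
        ((1 + R).mulVec z - R.mulVec a,
         -(R.mulVec z) + (1 + Wᵀ * W).mulVec a - Wᵀ.mulVec w,
         -(W.mulVec a) + w) := by
  have hRsym : Rᵀ = R := by
    ext i j
    by_cases h : i = j
    · subst h; simp
    · rw [transpose_apply, hRdiag i j h, hRdiag j i (Ne.symm h)]
  have hRapply : ∀ (x : Fin n1 → ℝ) i, R.mulVec x i = R i i * x i := by
    intro x i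
    rw [mulVec, dotProduct]
    rw [Finset.sum_eq_single i]
    · intro b _ hb; rw [hRdiag i b (Ne.symm hb), zero_mul]
    · intro h; exact absurd (Finset.mem_univ i) h
  -- characterize T
  have hTv : ∀ v : (Fin n1 → ℝ) × (Fin n1 → ℝ) × (Fin n2 → ℝ),
      T v = (v.1 - R.mulVec v.2.1, v.2.1 - Wᵀ.mulVec v.2.2, v.2.2) := by
    intro v
    have key : ∀ u : (Fin n1 → ℝ) × (Fin n1 → ℝ) × (Fin n2 → ℝ),
        (∑ i, u.1 i * (T v).1 i) + (∑ i, u.2.1 i * (T v).2.1 i)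
          + (∑ i, u.2.2 i * (T v).2.2 i)
        = (∑ i, u.1 i * (v.1 - R.mulVec v.2.1) i)
          + (∑ i, u.2.1 i * (v.2.1 - Wᵀ.mulVec v.2.2) i)
          + (∑ i, u.2.2 i * v.2.2 i) := by
      intro u
      rw [← hT u v, hδ u]
      simp only [Pi.sub_apply, sub_mul, mul_sub, Finset.sum_sub_distrib]
      rw [dot_mulVec R u.1 v.2.1, dot_mulVec W u.2.1 v.2.2, hRsym]
      ring
    refine Prod.ext ?_ (Prod.ext ?_ ?_)
    · funext i
      have h := key (Pi.single i 1, 0, 0)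
      simpa [single_dot] using h
    · funext i
      have h := key (0, Pi.single i 1, 0)
      simpa [single_dot] using h
    · funext i
      have h := key (0, 0, Pi.single i 1)
      simpa [single_dot] using h
  intro z a w
  rw [hδ, hTv]
  refine Prod.ext ?_ (Prod.ext ?_ ?_)
  · funext i
    simp only [add_mulVec, one_mulVec, Pi.add_apply, hRapply, Pi.sub_apply]
    rcases hR01 i with h | h <;> rw [h] <;> ring
  · funext i
    simp only [Pi.sub_apply, Pi.add_apply, Pi.neg_apply, add_mulVec, one_mulVec,
      mulVec_sub, ← mulVec_mulVec]
    rw [hRapply]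
    ring
  · funext i
    simp only [Pi.sub_apply, Pi.add_apply, Pi.neg_apply]
    ring
end

section
/- Fix matrices W1 ∈ Matrix (Fin n1) (Fin n0) ℝ, W2 ∈ Matrix (Fin n2) (Fin n1) ℝ, vectors b1 ∈ ℝ^{n1}, b2 ∈ ℝ^{n2}, and an input x ∈ ℝ^{n0}. Define the total discord G : ℝ^{n1} × ℝ^{n1} × ℝ^{n2} → ℝ by G(z, a, w) = (1/2)‖z − (W1.mulVec x + b1)‖² + (1/2)‖relu(z) − a‖² + (1/2)‖w − (W2.mulVec a + b2)‖², where relu(z) is the vector with coordinates max (z j) 0. Let (z, a, w) be a point with z j ≠ 0 for every j. Then G is Fréchet differentiable at (z, a, w), and its derivative vanishes there if and only if z = W1.mulVec x + b1, a = relu(z), and w = W2.mulVec a + b2. -/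
open Matrix
open scoped RealInnerProductSpace

noncomputable def reluLin (n : ℕ) (z : EuclideanSpace ℝ (Fin n)) :
    EuclideanSpace ℝ (Fin n) →L[ℝ] EuclideanSpace ℝ (Fin n) :=
  LinearMap.toContinuousLinearMap
    { toFun := fun v => WithLp.toLp 2 (fun j => if 0 < z j then v j else 0)
      map_add' := by
        intro v w; ext j
        by_cases h : 0 < z j <;> simp [h, PiLp.add_apply]
      map_smul' := by
        intro c v; ext j
        by_cases h : 0 < z j <;> simp [h, PiLp.smul_apply] }

theorem reluLin_apply (n : ℕ) (z v : EuclideanSpace ℝ (Fin n)) (j : Fin n) :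
    reluLin n z v j = if 0 < z j then v j else 0 := rfl


/-- Away from the ReLU switching surfaces (`z j ≠ 0` for all `j`), the total
discord `G` of the one-hidden-layer neural ReLU sheaf is Fréchet
differentiable, and its derivative vanishes exactly at the forward-pass
cochain: `z = W1 x + b1`, `a = relu z`, `w = W2 a + b2`. -/
theorem stmt_16 (n0 n1 n2 : ℕ)
    (W1 : Matrix (Fin n1) (Fin n0) ℝ) (W2 : Matrix (Fin n2) (Fin n1) ℝ)
    (b1 : EuclideanSpace ℝ (Fin n1)) (b2 : EuclideanSpace ℝ (Fin n2))
    (x : EuclideanSpace ℝ (Fin n0))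
    (relu : EuclideanSpace ℝ (Fin n1) → EuclideanSpace ℝ (Fin n1))
    (hrelu : ∀ v j, relu v j = max (v j) 0)
    (G : EuclideanSpace ℝ (Fin n1) × EuclideanSpace ℝ (Fin n1) ×
      EuclideanSpace ℝ (Fin n2) → ℝ)
    (hG : ∀ p, G p =
      (1 / 2) * ‖p.1 - (Matrix.toEuclideanLin W1 x + b1)‖ ^ 2
      + (1 / 2) * ‖relu p.1 - p.2.1‖ ^ 2
      + (1 / 2) * ‖p.2.2 - (Matrix.toEuclideanLin W2 p.2.1 + b2)‖ ^ 2)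
    (z a : EuclideanSpace ℝ (Fin n1)) (w : EuclideanSpace ℝ (Fin n2))
    (hz : ∀ j, z j ≠ 0) :
    DifferentiableAt ℝ G (z, a, w) ∧
    (fderiv ℝ G (z, a, w) = 0 ↔
      (z = Matrix.toEuclideanLin W1 x + b1 ∧ a = relu z ∧
        w = Matrix.toEuclideanLin W2 a + b2)) := by
  classical
  let E1 := EuclideanSpace ℝ (Fin n1)
  let E2 := EuclideanSpace ℝ (Fin n2)
  let P := E1 × E1 × E2
  let q : P := (z, a, w)
  let c1 : E1 := Matrix.toEuclideanLin W1 x + b1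
  let L : E1 →L[ℝ] E1 := reluLin n1 z
  let M : E1 →L[ℝ] E2 := LinearMap.toContinuousLinearMap (Matrix.toEuclideanLin W2)
  let f1 : P →L[ℝ] E1 := ContinuousLinearMap.fst ℝ E1 (E1 × E2)
  let s2 : P →L[ℝ] E1 × E2 := ContinuousLinearMap.snd ℝ E1 (E1 × E2)
  let A : P →L[ℝ] E1 := (ContinuousLinearMap.fst ℝ E1 E2).comp s2
  let B : P →L[ℝ] E2 := (ContinuousLinearMap.snd ℝ E1 E2).comp s2
  have hR1 : HasFDerivAt (fun p : P => p.1 - c1) f1 q :=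
    f1.hasFDerivAt.sub_const c1
  have hR2 : HasFDerivAt (fun p : P => L p.1 - p.2.1) (L.comp f1 - A) q :=
    (L.comp f1).hasFDerivAt.sub A.hasFDerivAt
  have hR3 : HasFDerivAt (fun p : P => p.2.2 - (M p.2.1 + b2)) (B - M.comp A) q :=
    B.hasFDerivAt.sub ((M.comp A).hasFDerivAt.add_const b2)
  have hI1 := hR1.inner ℝ hR1
  have hI2 := hR2.inner ℝ hR2
  have hI3 := hR3.inner ℝ hR3
  have hF := ((hI1.const_mul ((1:ℝ)/2)).add (hI2.const_mul ((1:ℝ)/2))).add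
    (hI3.const_mul ((1:ℝ)/2))
  have hLz : L z = relu z := by
    ext j
    rw [hrelu, reluLin_apply]
    rcases lt_or_ge 0 (z j) with h | h
    · simp [h, max_eq_left h.le]
    · simp [not_lt.mpr h, max_eq_right h]
  have hev : ∀ᶠ p : P in nhds q, relu p.1 = L p.1 := by
    have hall : ∀ᶠ p : P in nhds q, ∀ j, relu p.1 j = L p.1 j := by
      rw [Filter.eventually_all]
      intro j
      have hcont : ContinuousAt (fun p : P => EuclideanSpace.proj (𝕜 := ℝ) j p.1) q :=
        ((EuclideanSpace.proj (𝕜 := ℝ) j).continuous.comp continuous_fst).continuousAt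
      rcases lt_or_ge 0 (z j) with h | h
      · have hq0 : (0:ℝ) < EuclideanSpace.proj (𝕜 := ℝ) j q.1 := h
        filter_upwards [hcont.eventually (eventually_gt_nhds hq0)] with p hp
        have hp' : (0:ℝ) < p.1 j := hp
        rw [hrelu, reluLin_apply, if_pos h, max_eq_left hp'.le]
      · have h' : z j < 0 := h.lt_of_ne (hz j)
        have hq0 : EuclideanSpace.proj (𝕜 := ℝ) j q.1 < (0:ℝ) := h'
        filter_upwards [hcont.eventually (eventually_lt_nhds hq0)] with p hp
        have hp' : p.1 j < (0:ℝ) := hp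
        rw [hrelu, reluLin_apply, if_neg (not_lt.mpr h), max_eq_right hp'.le]
    filter_upwards [hall] with p hp
    exact PiLp.ext hp
  have heq : G =ᶠ[nhds q] fun p : P =>
      (1/2) * ⟪p.1 - c1, p.1 - c1⟫ + (1/2) * ⟪L p.1 - p.2.1, L p.1 - p.2.1⟫
      + (1/2) * ⟪p.2.2 - (M p.2.1 + b2), p.2.2 - (M p.2.1 + b2)⟫ := by
    filter_upwards [hev] with p hp
    rw [hG p, hp]
    simp only [real_inner_self_eq_norm_sq]
    rfl
  have hGF := hF.congr_of_eventuallyEq heq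
  refine ⟨hGF.differentiableAt, ?_⟩
  rw [hGF.fderiv]
  constructor
  · intro hD
    have hr3 : w - (M a + b2) = 0 := by
      have h3 := DFunLike.congr_fun hD ((0, 0, w - (M a + b2)) : P)
      simp [q, f1, s2, A, B, ContinuousLinearMap.comp_apply, ContinuousLinearMap.coe_fst',
        ContinuousLinearMap.coe_snd', fderivInnerCLM_apply, smul_eq_mul] at h3
      exact norm_eq_zero.mp h3
    have hr2 : L z - a = 0 := by
      have h2 := DFunLike.congr_fun hD ((0, L z - a, 0) : P)
      simp [q, f1, s2, A, B, ContinuousLinearMap.comp_apply, ContinuousLinearMap.coe_fst',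
        ContinuousLinearMap.coe_snd', fderivInnerCLM_apply, smul_eq_mul, hr3] at h2
      rw [← neg_sub (L z) a] at h2
      simp only [inner_neg_left, inner_neg_right] at h2
      exact inner_self_eq_zero (𝕜 := ℝ) |>.mp (by linarith)
    have hr1 : z - c1 = 0 := by
      have h1 := DFunLike.congr_fun hD ((z - c1, 0, 0) : P)
      simp [q, f1, s2, A, B, ContinuousLinearMap.comp_apply, ContinuousLinearMap.coe_fst',
        ContinuousLinearMap.coe_snd', fderivInnerCLM_apply, smul_eq_mul, hr2, hr3] at h1
      exact norm_eq_zero.mp h1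
    refine ⟨sub_eq_zero.mp hr1, ?_, ?_⟩
    · rw [← hLz, ← sub_eq_zero.mp hr2]
    · rw [sub_eq_zero.mp hr3]; rfl
  · rintro ⟨h1, h2, h3⟩
    have hr1 : z - c1 = 0 := sub_eq_zero.mpr h1
    have hr2 : L z - a = 0 := sub_eq_zero.mpr (by rw [hLz, ← h2])
    have hr3 : w - (M a + b2) = 0 := sub_eq_zero.mpr (by rw [h3]; rfl)
    apply ContinuousLinearMap.ext
    intro v
    simp [q, fderivInnerCLM_apply, smul_eq_mul, hr1, hr2, hr3]
end
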